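/- For two continuous functions μ₁, μ₂ : [0,1] → ℝ and a common σ > 0, the L₁ distance between the mixture densities satisfies ‖f_{μ₁,σ} − f_{μ₂,σ}‖₁ ≤ C · ‖μ₁ − μ₂‖₁ / σ for a universal constant C (one may take C = √(2/π)), where ‖μ₁ − μ₂‖₁ = ∫₀¹ |μ₁(x) − μ₂(x)| dx. -/

import Mathlib

/-!
Each mixture density is an average over `x ∈ [0,1]` of Gaussians centred at `μ x`, so by
Minkowski's integral inequality the L₁ distance is at most
`∫₀¹ ‖φ_σ(· - μ₁ x) - φ_σ(· - μ₂ x)‖₁ dx`. For an integrable `g` that decreases in `|t|`, the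
translates `g (· - a)` and `g (· - b)` cross at the midpoint `m` of `a` and `b`; splitting there
gives `‖g (· - a) - g (· - b)‖₁ = 2 ∫_{m-b}^{m-a} g ≤ 2 |a - b| g 0`, and `2 φ_σ(0) = √(2/π) / σ`.
-/

open MeasureTheory Real Set

/-- Gaussian density with mean 0 and standard deviation σ. -/
noncomputable def gauss (σ t : ℝ) : ℝ :=
  (Real.sqrt (2 * Real.pi) * σ)⁻¹ * Real.exp (-(t ^ 2) / (2 * σ ^ 2))

/-- NL-LVM mixture density with transfer function μ and bandwidth σ. -/
noncomputable def mixDens (μ : ℝ → ℝ) (σ : ℝ) (y : ℝ) : ℝ :=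
  ∫ x in Set.Icc (0 : ℝ) 1, gauss σ (y - μ x)

section Translation

variable {E : Type*} [NormedAddCommGroup E] [NormedSpace ℝ E]

theorem integral_Iic_comp_sub_right (f : ℝ → E) (m c : ℝ) :
    ∫ y in Iic m, f (y - c) = ∫ y in Iic (m - c), f y := by
  have h := (measurePreserving_sub_right volume c).setIntegral_preimage_emb
    (measurableEmbedding_subRight c) f (Iic (m - c))
  rwa [preimage_sub_const_Iic, sub_add_cancel] at h

theorem integral_Ioi_comp_sub_right (f : ℝ → E) (m c : ℝ) :
    ∫ y in Ioi m, f (y - c) = ∫ y in Ioi (m - c), f y := by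
  have h := (measurePreserving_sub_right volume c).setIntegral_preimage_emb
    (measurableEmbedding_subRight c) f (Ioi (m - c))
  rwa [preimage_sub_const_Ioi, sub_add_cancel] at h

end Translation

section SymmetricUnimodal

variable {g : ℝ → ℝ}

theorem integral_abs_sub_comp_sub_le_of_le (hg : Integrable g)
    (hg_mono : ∀ s t, t ^ 2 ≤ s ^ 2 → g s ≤ g t) {a b : ℝ} (hab : a ≤ b) :
    ∫ y, |g (y - a) - g (y - b)| ≤ 2 * (b - a) * g 0 := by
  set m := (a + b) / 2
  have hIa : Integrable (fun y => g (y - a)) := hg.comp_sub_right a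
  have hIb : Integrable (fun y => g (y - b)) := hg.comp_sub_right b
  have hleft : ∀ y ∈ Iic m, |g (y - a) - g (y - b)| = g (y - a) - g (y - b) := fun y hy =>
    abs_of_nonneg <| sub_nonneg.2 <| hg_mono (y - b) (y - a) <| by
      simp only [mem_Iic, m] at hy; nlinarith
  have hright : ∀ y ∈ Ioi m, |g (y - a) - g (y - b)| = g (y - b) - g (y - a) := fun y hy => by
    rw [abs_sub_comm]
    refine abs_of_nonneg <| sub_nonneg.2 <| hg_mono (y - a) (y - b) ?_
    simp only [mem_Ioi, m] at hy; nlinarith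
  have hhalves : ∫ y, |g (y - a) - g (y - b)| = 2 * ∫ y in (m - b)..(m - a), g y := by
    have habs : Integrable (fun y => |g (y - a) - g (y - b)|) := (hIa.sub hIb).abs
    rw [← intervalIntegral.integral_Iic_add_Ioi habs.integrableOn habs.integrableOn,
      setIntegral_congr_fun measurableSet_Iic hleft,
      setIntegral_congr_fun measurableSet_Ioi hright,
      integral_sub hIa.integrableOn hIb.integrableOn,
      integral_sub hIb.integrableOn hIa.integrableOn,
      integral_Iic_comp_sub_right, integral_Iic_comp_sub_right,
      integral_Ioi_comp_sub_right, integral_Ioi_comp_sub_right,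
      intervalIntegral.integral_Iic_sub_Iic hg.integrableOn hg.integrableOn,
      intervalIntegral.integral_Ioi_sub_Ioi' hg.integrableOn hg.integrableOn]
    ring
  have hpeak : ∫ y in (m - b)..(m - a), g y ≤ (b - a) * g 0 := by
    have := intervalIntegral.integral_mono_on (by linarith : m - b ≤ m - a) hg.intervalIntegrable
      intervalIntegrable_const fun t _ => hg_mono t 0 (by simpa using sq_nonneg t)
    rwa [intervalIntegral.integral_const, smul_eq_mul, sub_sub_sub_cancel_left] at this
  linarith

theorem integral_abs_sub_comp_sub_le (hg : Integrable g)
    (hg_mono : ∀ s t, t ^ 2 ≤ s ^ 2 → g s ≤ g t) (a b : ℝ) :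
    ∫ y, |g (y - a) - g (y - b)| ≤ 2 * |a - b| * g 0 := by
  rcases le_total a b with hab | hba
  · rw [abs_sub_comm, abs_of_nonneg (sub_nonneg.2 hab)]
    exact integral_abs_sub_comp_sub_le_of_le hg hg_mono hab
  · simp_rw [abs_of_nonneg (sub_nonneg.2 hba), abs_sub_comm (g (_ - a))]
    exact integral_abs_sub_comp_sub_le_of_le hg hg_mono hba

end SymmetricUnimodal

theorem continuous_gauss (σ : ℝ) : Continuous (gauss σ) := by
  unfold gauss; fun_prop

theorem integrable_gauss {σ : ℝ} (hσ : σ ≠ 0) : Integrable (gauss σ) := by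
  have h := (integrable_exp_neg_mul_sq (b := 1 / (2 * σ ^ 2)) (by positivity)).const_mul
    (√(2 * π) * σ)⁻¹
  refine h.congr (ae_of_all _ fun t => ?_)
  simp only [gauss]
  ring_nf

theorem gauss_le_gauss_of_sq_le {σ : ℝ} (hσ : 0 ≤ σ) {s t : ℝ} (h : t ^ 2 ≤ s ^ 2) :
    gauss σ s ≤ gauss σ t := by
  unfold gauss
  gcongr

theorem gauss_zero (σ : ℝ) : gauss σ 0 = (√(2 * π) * σ)⁻¹ := by
  simp [gauss]

theorem integral_abs_gauss_sub_le {σ : ℝ} (hσ : 0 < σ) (a b : ℝ) :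
    ∫ y, |gauss σ (y - a) - gauss σ (y - b)| ≤ √(2 / π) * |a - b| / σ := by
  have hconst : √(2 / π) = 2 / √(2 * π) := by
    rw [show 2 / π = 2 ^ 2 / (2 * π) by field_simp, sqrt_div (by positivity),
      sqrt_sq zero_le_two]
  calc ∫ y, |gauss σ (y - a) - gauss σ (y - b)| ≤ 2 * |a - b| * gauss σ 0 :=
        integral_abs_sub_comp_sub_le (integrable_gauss hσ.ne')
          (fun _ _ => gauss_le_gauss_of_sq_le hσ.le) a b
    _ = √(2 / π) * |a - b| / σ := by
        rw [gauss_zero, hconst]; field_simp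

section Minkowski

variable {α β E : Type*} [MeasurableSpace α] [MeasurableSpace β]
  [NormedAddCommGroup E] [NormedSpace ℝ E] {μ : Measure α} {ν : Measure β} [SFinite μ] [SFinite ν]

theorem integral_norm_integral_le_of_ae_integral_norm_le {F : β → α → E} {B : α → ℝ}
    (hF : AEStronglyMeasurable (Function.uncurry F) (ν.prod μ))
    (hF_int : ∀ᵐ x ∂μ, Integrable (fun y => F y x) ν) (hB : Integrable B μ)
    (hFB : ∀ᵐ x ∂μ, ∫ y, ‖F y x‖ ∂ν ≤ B x) :
    ∫ y, ‖∫ x, F y x ∂μ‖ ∂ν ≤ ∫ x, B x ∂μ := by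
  have hB_nonneg : 0 ≤ᵐ[μ] B :=
    hFB.mono fun _ hx => (integral_nonneg fun _ => norm_nonneg _).trans hx
  rw [integral_norm_eq_lintegral_enorm (f := fun y => ∫ x, F y x ∂μ) hF.integral_prod_right']
  refine ENNReal.toReal_le_of_le_ofReal (integral_nonneg_of_ae hB_nonneg) ?_
  calc ∫⁻ y, ‖∫ x, F y x ∂μ‖ₑ ∂ν ≤ ∫⁻ y, ∫⁻ x, ‖F y x‖ₑ ∂μ ∂ν :=
        lintegral_mono fun y => enorm_integral_le_lintegral_enorm _
    _ = ∫⁻ x, ∫⁻ y, ‖F y x‖ₑ ∂ν ∂μ := lintegral_lintegral_swap hF.enorm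
    _ ≤ ∫⁻ x, ENNReal.ofReal (B x) ∂μ := by
        refine lintegral_mono_ae ?_
        filter_upwards [hF_int, hFB] with x hx_int hx_le
        rw [← ofReal_integral_norm_eq_lintegral_enorm hx_int]
        exact ENNReal.ofReal_le_ofReal hx_le
    _ = ENNReal.ofReal (∫ x, B x ∂μ) := (ofReal_integral_eq_lintegral_ofReal hB hB_nonneg).symm

end Minkowski

/-- L₁ distance between mixture densities with common bandwidth is
bounded by `√(2/π) · ‖μ₁ − μ₂‖₁ / σ`. -/
theorem stmt_8 (μ₁ μ₂ : ℝ → ℝ) (hμ₁ : ContinuousOn μ₁ (Set.Icc 0 1))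
    (hμ₂ : ContinuousOn μ₂ (Set.Icc 0 1)) (σ : ℝ) (hσ : 0 < σ) :
    ∫ y, |mixDens μ₁ σ y - mixDens μ₂ σ y|
      ≤ Real.sqrt (2 / Real.pi) * (∫ x in Set.Icc (0 : ℝ) 1, |μ₁ x - μ₂ x|) / σ := by
  have hsection : ∀ {m : ℝ → ℝ}, ContinuousOn m (Icc 0 1) → ∀ y,
      IntegrableOn (fun x => gauss σ (y - m x)) (Icc 0 1) := fun hm y =>
    ((continuous_gauss σ).comp_continuousOn (continuousOn_const.sub hm)).integrableOn_compact
      isCompact_Icc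
  have hjoint : ∀ {m : ℝ → ℝ}, ContinuousOn m (Icc 0 1) → AEStronglyMeasurable
      (fun p : ℝ × ℝ => gauss σ (p.1 - m p.2)) (volume.prod (volume.restrict (Icc 0 1))) :=
    fun hm => ((continuous_gauss σ).measurable.comp_aemeasurable <| measurable_fst.aemeasurable.sub
      (hm.aemeasurable measurableSet_Icc).comp_snd).aestronglyMeasurable
  have hdiff : ∀ y, mixDens μ₁ σ y - mixDens μ₂ σ y
      = ∫ x in Icc 0 1, (gauss σ (y - μ₁ x) - gauss σ (y - μ₂ x)) := fun y =>
    (integral_sub (hsection hμ₁ y) (hsection hμ₂ y)).symm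
  have hbound : IntegrableOn (fun x => √(2 / π) * |μ₁ x - μ₂ x| / σ) (Icc 0 1) :=
    ((continuousOn_const.mul (hμ₁.sub hμ₂).abs).div_const σ).integrableOn_compact isCompact_Icc
  simp_rw [hdiff]
  calc ∫ y, |∫ x in Icc 0 1, (gauss σ (y - μ₁ x) - gauss σ (y - μ₂ x))|
      ≤ ∫ x in Icc 0 1, √(2 / π) * |μ₁ x - μ₂ x| / σ :=
        integral_norm_integral_le_of_ae_integral_norm_le ((hjoint hμ₁).sub (hjoint hμ₂))
          (ae_of_all _ fun _ => ((integrable_gauss hσ.ne').comp_sub_right _).sub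
            ((integrable_gauss hσ.ne').comp_sub_right _))
          hbound (ae_of_all _ fun _ => integral_abs_gauss_sub_le hσ _ _)
    _ = √(2 / π) * (∫ x in Icc 0 1, |μ₁ x - μ₂ x|) / σ := by
        rw [integral_div, integral_const_mul]
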